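/- arXiv:2512.24453 — 8 statements merged into one kernel-verified Lean document; each statement's English description precedes it below -/
import Mathlib

section
/- Let H : (ℝ → ℝ) → (ℝ → ℝ) map measurable functions to measurable functions, be causal, and be finite-gain stable with gain h ≥ 0. Then for every measurable, locally square-integrable u : ℝ → ℝ supported on [0,∞), limsup_{T→∞} (1/T)∫₀ᵀ ((H u)(t))² dt ≤ h² · limsup_{T→∞} (1/T)∫₀ᵀ u(t)² dt (in [0,∞]). In particular, if u is a power signal then H u is a power signal and ‖H u‖_P ≤ h‖u‖_P, i.e. the power gain of H is at most its L² gain. -/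
open MeasureTheory Filter
open scoped ENNReal

/-- Power of a signal: `limsup_{T→∞} (1/T) ∫₀ᵀ u(t)² dt`, in `[0, ∞]`. -/
noncomputable def powerSq (u : ℝ → ℝ) : ℝ≥0∞ :=
  Filter.limsup (fun T : ℝ => ENNReal.ofReal ((1 / T) * ∫ t in Set.Ioc (0 : ℝ) T, (u t) ^ 2))
    Filter.atTop

/-- The truncation `u_T`: equal to `u` on `[0, T]` and `0` elsewhere. -/
noncomputable def trunc (u : ℝ → ℝ) (T : ℝ) : ℝ → ℝ := fun t => if 0 ≤ t ∧ t ≤ T then u t else 0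

/-- `H` is causal: for every input `u` and every `T > 0`, `(H u)(t) = (H u_T)(t)` for
almost every `t ∈ [0, T]`. -/
def Causal (H : (ℝ → ℝ) → ℝ → ℝ) : Prop :=
  ∀ u : ℝ → ℝ, ∀ T : ℝ, 0 < T →
    ∀ᵐ t ∂(volume.restrict (Set.Icc (0 : ℝ) T)), H u t = H (trunc u T) t

/-- Membership of `L²([0,∞))`. -/
def MemL2pos (u : ℝ → ℝ) : Prop := MemLp u 2 (volume.restrict (Set.Ici (0 : ℝ)))

/-- `H` is finite-gain stable with gain `h`: it maps `L²([0,∞))` into itself and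
`‖H u‖_{L²} ≤ h ‖u‖_{L²}` for all `u ∈ L²([0,∞))`. -/
def FGS (H : (ℝ → ℝ) → ℝ → ℝ) (h : ℝ) : Prop :=
  ∀ u : ℝ → ℝ, MemL2pos u → MemL2pos (H u) ∧
    eLpNorm (H u) 2 (volume.restrict (Set.Ici (0 : ℝ))) ≤
      ENNReal.ofReal h * eLpNorm u 2 (volume.restrict (Set.Ici (0 : ℝ)))

/-! Causality lets one replace `u` by its truncation `u_T` without changing `H u` on `[0, T]`,
and `u_T` lies in `L²`, so the `L²` gain bounds the energy of `H u` on `[0, T]` by `h²` times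
that of `u`. Dividing by `T` and passing to the `limsup` gives the claim. -/

open Set

lemma eLpNorm_two_sq_eq_lintegral {α : Type*} [MeasurableSpace α] (f : α → ℝ) (μ : Measure α) :
    eLpNorm f 2 μ ^ 2 = ∫⁻ x, ENNReal.ofReal (f x ^ 2) ∂μ := by
  have := eLpNorm_nnreal_pow_eq_lintegral (f := f) (μ := μ) (p := 2) two_ne_zero
  simp only [NNReal.coe_ofNat, ENNReal.rpow_two, ENNReal.coe_ofNat] at this
  rw [this]
  congr 1 with x
  rw [Real.enorm_eq_ofReal_abs, ← ENNReal.ofReal_pow (abs_nonneg _), sq_abs]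

lemma ofReal_integral_le_lintegral_ofReal {α : Type*} [MeasurableSpace α] {μ : Measure α}
    {f : α → ℝ} (hf : 0 ≤ᵐ[μ] f) :
    ENNReal.ofReal (∫ x, f x ∂μ) ≤ ∫⁻ x, ENNReal.ofReal (f x) ∂μ := by
  by_cases hint : Integrable f μ
  · exact (ofReal_integral_eq_lintegral_ofReal hint hf).le
  · simp [integral_undef hint]

lemma ofReal_sq_le_ofReal_sq (h : ℝ) : ENNReal.ofReal h ^ 2 ≤ ENNReal.ofReal (h ^ 2) := by
  rcases le_total 0 h with hh | hh
  · rw [ENNReal.ofReal_pow hh]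
  · simp [ENNReal.ofReal_of_nonpos hh]

lemma trunc_eq_indicator (u : ℝ → ℝ) (T : ℝ) : trunc u T = (Icc 0 T).indicator u := by
  ext t
  simp [trunc, Set.indicator]

lemma lintegral_sq_trunc (u : ℝ → ℝ) (T : ℝ) :
    ∫⁻ t in Ici 0, ENNReal.ofReal (trunc u T t ^ 2) = ∫⁻ t in Ioc 0 T, ENNReal.ofReal (u t ^ 2) := by
  have hsq : (fun t => ENNReal.ofReal (trunc u T t ^ 2)) =
      (Icc 0 T).indicator fun t => ENNReal.ofReal (u t ^ 2) := by
    ext t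
    by_cases ht : t ∈ Icc 0 T <;> simp [trunc_eq_indicator, ht]
  rw [hsq, lintegral_indicator measurableSet_Icc, Measure.restrict_restrict measurableSet_Icc,
    inter_eq_left.2 fun _ ht => ht.1, Measure.restrict_congr_set Ioc_ae_eq_Icc]

lemma memL2pos_trunc {u : ℝ → ℝ} (hu : AEStronglyMeasurable u) {T : ℝ}
    (huloc : IntegrableOn (fun t => u t ^ 2) (Ioc 0 T)) : MemL2pos (trunc u T) := by
  refine ⟨(trunc_eq_indicator u T ▸ hu.indicator measurableSet_Icc).restrict, ?_⟩
  have hsq : eLpNorm (trunc u T) 2 (volume.restrict (Ici 0)) ^ 2 < ∞ := by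
    rw [eLpNorm_two_sq_eq_lintegral, lintegral_sq_trunc]
    exact huloc.lintegral_lt_top
  exact (ENNReal.pow_lt_top_iff.1 hsq).resolve_right two_ne_zero

lemma lintegral_sq_Ioc_le_of_causal_of_FGS {H : (ℝ → ℝ) → ℝ → ℝ} (hcausal : Causal H) {h : ℝ}
    (hfgs : FGS H h) {u : ℝ → ℝ} (hu : AEStronglyMeasurable u) {T : ℝ} (hT : 0 < T)
    (huloc : IntegrableOn (fun t => u t ^ 2) (Ioc 0 T)) :
    ∫⁻ t in Ioc 0 T, ENNReal.ofReal (H u t ^ 2) ≤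
      ENNReal.ofReal (h ^ 2) * ∫⁻ t in Ioc 0 T, ENNReal.ofReal (u t ^ 2) := by
  have hHu_eq : H u =ᵐ[volume.restrict (Ioc 0 T)] H (trunc u T) := by
    rw [Measure.restrict_congr_set Ioc_ae_eq_Icc]
    exact hcausal u T hT
  calc ∫⁻ t in Ioc 0 T, ENNReal.ofReal (H u t ^ 2)
      = ∫⁻ t in Ioc 0 T, ENNReal.ofReal (H (trunc u T) t ^ 2) :=
        lintegral_congr_ae (hHu_eq.fun_comp fun x => ENNReal.ofReal (x ^ 2))
    _ ≤ ∫⁻ t in Ici 0, ENNReal.ofReal (H (trunc u T) t ^ 2) :=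
        lintegral_mono_set fun _ ht => ht.1.le
    _ = eLpNorm (H (trunc u T)) 2 (volume.restrict (Ici 0)) ^ 2 :=
        (eLpNorm_two_sq_eq_lintegral _ _).symm
    _ ≤ (ENNReal.ofReal h * eLpNorm (trunc u T) 2 (volume.restrict (Ici 0))) ^ 2 := by
        gcongr
        exact (hfgs _ (memL2pos_trunc hu huloc)).2
    _ ≤ ENNReal.ofReal (h ^ 2) * eLpNorm (trunc u T) 2 (volume.restrict (Ici 0)) ^ 2 := by
        rw [mul_pow]
        gcongr
        exact ofReal_sq_le_ofReal_sq h
    _ = ENNReal.ofReal (h ^ 2) * ∫⁻ t in Ioc 0 T, ENNReal.ofReal (u t ^ 2) := by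
        rw [eLpNorm_two_sq_eq_lintegral, lintegral_sq_trunc]

lemma powerSq_le_const_mul_of_lintegral_sq_le {v u : ℝ → ℝ} {c : ℝ≥0∞} (hc : c ≠ ∞)
    (huloc : ∀ T : ℝ, 0 < T → IntegrableOn (fun t => u t ^ 2) (Ioc 0 T))
    (hvu : ∀ T : ℝ, 0 < T → ∫⁻ t in Ioc 0 T, ENNReal.ofReal (v t ^ 2) ≤
      c * ∫⁻ t in Ioc 0 T, ENNReal.ofReal (u t ^ 2)) :
    powerSq v ≤ c * powerSq u := by
  have hmean : ∀ᶠ T in atTop, ENNReal.ofReal ((1 / T) * ∫ t in Ioc 0 T, v t ^ 2) ≤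
      c * ENNReal.ofReal ((1 / T) * ∫ t in Ioc 0 T, u t ^ 2) := by
    filter_upwards [eventually_gt_atTop 0] with T hT
    have hsq : ∀ f : ℝ → ℝ, 0 ≤ᵐ[volume.restrict (Ioc 0 T)] fun t => f t ^ 2 :=
      fun f => .of_forall fun t => sq_nonneg (f t)
    calc ENNReal.ofReal ((1 / T) * ∫ t in Ioc 0 T, v t ^ 2)
        ≤ ENNReal.ofReal (1 / T) * ∫⁻ t in Ioc 0 T, ENNReal.ofReal (v t ^ 2) := by
          rw [ENNReal.ofReal_mul (by positivity)]
          gcongr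
          exact ofReal_integral_le_lintegral_ofReal (hsq v)
      _ ≤ ENNReal.ofReal (1 / T) * (c * ∫⁻ t in Ioc 0 T, ENNReal.ofReal (u t ^ 2)) := by
          gcongr
          exact hvu T hT
      _ = c * ENNReal.ofReal ((1 / T) * ∫ t in Ioc 0 T, u t ^ 2) := by
          rw [ENNReal.ofReal_mul (by positivity),
            ofReal_integral_eq_lintegral_ofReal (huloc T hT) (hsq u), mul_left_comm]
  calc powerSq v ≤ limsup (fun T : ℝ => c * ENNReal.ofReal ((1 / T) * ∫ t in Ioc 0 T, u t ^ 2))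
        atTop := limsup_le_limsup hmean
    _ = c * powerSq u := ENNReal.limsup_const_mul_of_ne_top hc

theorem power_gain_le_L2_gain_general (H : (ℝ → ℝ) → ℝ → ℝ)
    (hcausal : Causal H) (h : ℝ) (hfgs : FGS H h)
    (u : ℝ → ℝ) (hu : Measurable u)
    (huloc : ∀ T : ℝ, 0 < T → IntegrableOn (fun t => (u t) ^ 2) (Set.Ioc 0 T)) :
    powerSq (H u) ≤ ENNReal.ofReal (h ^ 2) * powerSq u :=
  powerSq_le_const_mul_of_lintegral_sq_le ENNReal.ofReal_ne_top huloc fun T hT =>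
    lintegral_sq_Ioc_le_of_causal_of_FGS hcausal hfgs hu.aestronglyMeasurable hT (huloc T hT)

/-- A causal finite-gain-stable operator with gain `h` has power gain at most `h`:
for any measurable, locally square-integrable `u` supported on `[0, ∞)`,
`limsup_{T→∞} (1/T)∫₀ᵀ (H u)² ≤ h² limsup_{T→∞} (1/T)∫₀ᵀ u²` in `[0, ∞]`. -/
theorem power_gain_le_L2_gain (H : (ℝ → ℝ) → ℝ → ℝ)
    (hmeas : ∀ u : ℝ → ℝ, Measurable u → Measurable (H u))
    (hcausal : Causal H) (h : ℝ) (hh : 0 ≤ h) (hfgs : FGS H h)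
    (u : ℝ → ℝ) (hu : Measurable u) (husupp : ∀ t : ℝ, t < 0 → u t = 0)
    (huloc : ∀ T : ℝ, 0 < T → IntegrableOn (fun t => (u t) ^ 2) (Set.Ioc 0 T)) :
    powerSq (H u) ≤ ENNReal.ofReal (h ^ 2) * powerSq u :=
  power_gain_le_L2_gain_general H hcausal h hfgs u hu huloc
end

section
/- Let N be a periodic MMB nonlinearity with period T > 0. Let u ∈ L²(ℝ) and set y(t) = N(t, u(t)) (so y is measurable and y ∈ L²(ℝ) since |y| ≤ C|u|). Then for every n ∈ ℤ, ∫_ℝ u(t + nT)·y(t) dt ≤ ∫_ℝ u(t)·y(t) dt. -/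
open MeasureTheory

/-- A periodic memoryless, monotone and bounded (MMB) nonlinearity with period `T`:
`N : ℝ × ℝ → ℝ` is jointly measurable, `T`-periodic in its first variable,
nondecreasing in its second variable, and bounded in the sense that
`|N(t,x)| ≤ C|x|` for some `C ≥ 0`. -/
def IsPeriodicMMB (N : ℝ → ℝ → ℝ) (T : ℝ) : Prop :=
  Measurable (Function.uncurry N) ∧
  (∀ t x : ℝ, N (t + T) x = N t x) ∧
  (∀ t : ℝ, Monotone (N t)) ∧
  ∃ C : ℝ, 0 ≤ C ∧ ∀ t x : ℝ, |N t x| ≤ C * |x|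

/-!
Let `G(t, x) = ∫₀ˣ N(t, s) ds`. Since `N(t, ·)` is nondecreasing, `G(t, ·)` is convex with
`N(t, ·)` as a subgradient: `(a - b) N(t, b) ≤ G(t, a) - G(t, b)`. Taking `a = u(t + c)`,
`b = u(t)` and integrating over `t`, the two `G` terms cancel, because `G` inherits the
`c`-periodicity of `N` in `t` and Lebesgue measure is translation invariant. The growth bound
`|N(t, x)| ≤ C|x|` gives `|G(t, x)| ≤ C x²`, which makes every integral involved finite.
-/

open Function Set

theorem Monotone.sub_mul_le_intervalIntegral {f : ℝ → ℝ} (hf : Monotone f) (a b : ℝ) :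
    (a - b) * f b ≤ ∫ s in b..a, f s := by
  rcases le_total b a with hba | hab
  · calc (a - b) * f b = ∫ _ in b..a, f b := by simp
      _ ≤ ∫ s in b..a, f s := intervalIntegral.integral_mono_on hba intervalIntegrable_const
          hf.intervalIntegrable fun s hs => hf hs.1
  · have h : ∫ s in a..b, f s ≤ ∫ _ in a..b, f b := intervalIntegral.integral_mono_on hab
      hf.intervalIntegrable intervalIntegrable_const fun s hs => hf hs.2
    rw [intervalIntegral.integral_const, smul_eq_mul] at h
    rw [intervalIntegral.integral_symm]
    linarith

theorem abs_intervalIntegral_le_mul_sq {f : ℝ → ℝ} {C : ℝ} (hf : ∀ s, |f s| ≤ C * |s|)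
    (x : ℝ) : |∫ s in (0 : ℝ)..x, f s| ≤ C * x ^ 2 := by
  have hC : 0 ≤ C := nonneg_of_mul_nonneg_left ((abs_nonneg _).trans (hf 1)) (by simp)
  have hbound : ∀ s ∈ uIoc 0 x, ‖f s‖ ≤ C * |x| := fun s hs => by
    have hsx : |s - 0| ≤ |x - 0| := abs_sub_left_of_mem_uIcc (uIoc_subset_uIcc hs)
    rw [sub_zero, sub_zero] at hsx
    exact (hf s).trans (by gcongr)
  calc |∫ s in (0 : ℝ)..x, f s| ≤ C * |x| * |x - 0| :=
        intervalIntegral.norm_integral_le_of_norm_le_const hbound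
    _ = C * x ^ 2 := by rw [sub_zero, mul_assoc, abs_mul_abs_self, sq]

variable {α : Type*}

noncomputable def potential (N : α → ℝ → ℝ) (t : α) (x : ℝ) : ℝ := ∫ s in (0 : ℝ)..x, N t s

section potential

variable {N : α → ℝ → ℝ}

theorem measurable_potential [MeasurableSpace α] (hN : Measurable (uncurry N))
    (hint : ∀ t a b, IntervalIntegrable (N t) volume a b) :
    Measurable (uncurry (potential N)) := by
  have hcont : ∀ t, Continuous (potential N t) := fun t =>
    intervalIntegral.continuous_primitive (hint t) 0
  have hmeas : ∀ x, Measurable fun t => potential N t x := fun x => by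
    have hIoc : ∀ a b, Measurable fun t => ∫ s in Ioc a b, N t s := fun a b =>
      (hN.stronglyMeasurable.integral_prod_right (ν := volume.restrict (Ioc a b))).measurable
    exact (hIoc 0 x).sub (hIoc x 0)
  -- Carathéodory: measurable in `t`, continuous in `x`.
  exact (measurable_uncurry_of_continuous_of_measurable (u := fun x t => potential N t x)
    hcont hmeas).comp measurable_swap

theorem sub_mul_le_potential_sub {t : α} (hmono : Monotone (N t)) (a b : ℝ) :
    (a - b) * N t b ≤ potential N t a - potential N t b := by
  rw [potential, potential, intervalIntegral.integral_interval_sub_left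
    hmono.intervalIntegrable hmono.intervalIntegrable]
  exact hmono.sub_mul_le_intervalIntegral a b

theorem potential_add_period [Add α] {c : α} (hper : ∀ t x, N (t + c) x = N t x) (t : α)
    (x : ℝ) : potential N (t + c) x = potential N t x := by
  simp only [potential, hper]

variable [MeasurableSpace α] {C : ℝ} {μ : Measure α} {u : α → ℝ}

theorem memLp_comp_nonlinearity {p : ENNReal} (hN : Measurable (uncurry N))
    (hC : ∀ t x, |N t x| ≤ C * |x|) (hu : MemLp u p μ) : MemLp (fun t => N t (u t)) p μ :=
  hu.of_le_mul
    (hN.comp_aemeasurable (aemeasurable_id.prodMk hu.aemeasurable)).aestronglyMeasurable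
    (.of_forall fun t => hC t (u t))

theorem integrable_potential_comp (hN : Measurable (uncurry N))
    (hmono : ∀ t, Monotone (N t)) (hC : ∀ t x, |N t x| ≤ C * |x|) (hu : MemLp u 2 μ) :
    Integrable (fun t => potential N t (u t)) μ := by
  have hG := measurable_potential hN fun t _ _ => (hmono t).intervalIntegrable
  refine (hu.integrable_sq.const_mul C).mono'
    (hG.comp_aemeasurable (aemeasurable_id.prodMk hu.aemeasurable)).aestronglyMeasurable
    (.of_forall fun t => ?_)
  exact abs_intervalIntegral_le_mul_sq (hC t) (u t)

end potential

theorem integral_comp_add_mul_nonlinearity_le {N : ℝ → ℝ → ℝ} {c C : ℝ} {u : ℝ → ℝ}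
    (hN : Measurable (uncurry N)) (hper : ∀ t x, N (t + c) x = N t x)
    (hmono : ∀ t, Monotone (N t)) (hC : ∀ t x, |N t x| ≤ C * |x|) (hu : MemLp u 2 volume) :
    ∫ t, u (t + c) * N t (u t) ≤ ∫ t, u t * N t (u t) := by
  have hy := memLp_comp_nonlinearity hN hC hu
  have hprod : Integrable (fun t => u t * N t (u t)) := hu.integrable_mul hy
  have hprod_c : Integrable (fun t => u (t + c) * N t (u t)) :=
    (hu.comp_measurePreserving (measurePreserving_add_right volume c)).integrable_mul hy
  have hG := integrable_potential_comp hN hmono hC hu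
  have hGc : (fun t => potential N t (u (t + c))) =
      fun t => potential N (t + c) (u (t + c)) := by
    simp only [potential_add_period hper]
  have hGc_int : Integrable (fun t => potential N t (u (t + c))) := hGc ▸ hG.comp_add_right c
  have hGc_eq : ∫ t, potential N t (u (t + c)) = ∫ t, potential N t (u t) :=
    hGc ▸ integral_add_right_eq_self (fun t => potential N t (u t)) c
  have hdiff : Integrable fun t => potential N t (u (t + c)) - potential N t (u t) :=
    hGc_int.sub hG
  have hpointwise : ∀ t, u (t + c) * N t (u t) ≤
      potential N t (u (t + c)) - potential N t (u t) + u t * N t (u t) := fun t => by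
    linarith [sub_mul_le_potential_sub (hmono t) (u (t + c)) (u t)]
  calc ∫ t, u (t + c) * N t (u t)
      ≤ ∫ t, (potential N t (u (t + c)) - potential N t (u t) + u t * N t (u t)) :=
        integral_mono hprod_c (hdiff.add hprod) hpointwise
    _ = ∫ t, u t * N t (u t) := by
        rw [integral_add hdiff hprod, integral_sub hGc_int hG, hGc_eq, sub_self, zero_add]

theorem shifted_inner_product_le_general (N : ℝ → ℝ → ℝ) (T : ℝ)
    (hN : IsPeriodicMMB N T) (u : ℝ → ℝ)
    (huL2 : MemLp u 2 (volume : Measure ℝ)) (n : ℤ) :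
    ∫ t : ℝ, u (t + n * T) * N t (u t) ≤ ∫ t : ℝ, u t * N t (u t) := by
  obtain ⟨hmeas, hper, hmono, C, -, hC⟩ := hN
  have hperZ : ∀ t x, N (t + n * T) x = N t x := fun t x =>
    Periodic.int_mul (f := fun s => N s x) (fun s => hper s x) n t
  exact integral_comp_add_mul_nonlinearity_le hmeas hperZ hmono hC huL2

/-- For a periodic MMB nonlinearity `N` with period `T > 0` and `u ∈ L²(ℝ)`, with
`y(t) = N(t, u(t))`, for every integer `n` we have
`∫ u(t + nT) y(t) dt ≤ ∫ u(t) y(t) dt`. -/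
theorem shifted_inner_product_le (N : ℝ → ℝ → ℝ) (T : ℝ) (hT : 0 < T)
    (hN : IsPeriodicMMB N T) (u : ℝ → ℝ) (hu : Measurable u)
    (huL2 : MemLp u 2 (volume : Measure ℝ)) (n : ℤ) :
    ∫ t : ℝ, u (t + n * T) * N t (u t) ≤ ∫ t : ℝ, u t * N t (u t) :=
  shifted_inner_product_le_general N T hN u huL2 n
end

section
/- Let T > 0. Let an OZF multiplier be given by data: a measurable integrable h : ℝ → ℝ with h ≥ 0, a summable family of weights w : ℕ → ℝ with wᵢ ≥ 0, and times τ : ℕ → ℝ with τᵢ ≠ 0, satisfying ∫_ℝ h + Σᵢ wᵢ < 1. Suppose this multiplier is not an Altshuller multiplier with period T in the following sense: either (i) there exists i with wᵢ > 0 and τᵢ not an integer multiple of T, or (ii) there exist h̲ > 0, t_j ∈ ℝ and δ > 0 with 0 < δ < T such that h(t) ≥ h̲ for almost every t ∈ (t_j, t_j + δ) and the interval (t_j, t_j + δ) contains no integer multiple of T/2. Then there exist a periodic MMB nonlinearity N with period T and u ∈ L²(ℝ) such that, with y(t) = N(t, u(t)), ∫_ℝ ( u(t) − ∫_ℝ h(s)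 u(t−s) ds − Σᵢ wᵢ u(t − τᵢ) ) · y(t) dt < 0. -/
open MeasureTheory

/-!
Gate the nonlinearity by a `T`-periodic window: `N(t, x) = x` when `t mod T ∈ [0, ε)` and `0`
otherwise. Feed it the input `u` equal to `1` on `(0, ε)` plus a pulse of height `K` on
`(-σ, -σ + ε)`, where `σ` keeps distance at least `ε` from `Tℤ`. The second pulse then misses every
window, so `N(t, u(t))` is the indicator of `(0, ε)` and the integral reduces to
`∫₀^ε (1 - ∫ h(s) u(t - s) ds - ∑ wᵢ u(t - τᵢ)) dt`. The shift `σ` is chosen so that for every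
`t ∈ (0, ε)` the memory term sees the tall pulse: `σ = τᵢ` in case (i), `σ` the midpoint of the
interval where `h ≥ h̲` in case (ii). Taking `K` large makes the memory term at least `2` on
`(0, ε)`, so the integral is at most `-ε`.
-/

open Set

section Memory

variable {h : ℝ → ℝ} {w τ : ℕ → ℝ} {u : ℝ → ℝ} {M : ℝ}

theorem integrable_mul_comp_sub (hh : Integrable h) (hu : Measurable u) (huM : ∀ t, |u t| ≤ M)
    (t : ℝ) : Integrable fun s => h s * u (t - s) :=
  hh.mul_bdd (hu.comp (measurable_const.sub measurable_id)).aestronglyMeasurable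
    (ae_of_all _ fun _ => huM _)

theorem summable_mul_comp_sub (hws : Summable w) (huM : ∀ t, |u t| ≤ M) (τ : ℕ → ℝ) (t : ℝ) :
    Summable fun i => w i * u (t - τ i) :=
  Summable.of_norm_bounded (hws.abs.mul_right M) fun i => by
    rw [Real.norm_eq_abs, abs_mul]
    exact mul_le_mul_of_nonneg_left (huM _) (abs_nonneg _)

/-- The OZF multiplier acts as `u ↦ u - ozfMemory h w τ u`. -/
noncomputable def ozfMemory (h : ℝ → ℝ) (w τ : ℕ → ℝ) (u : ℝ → ℝ) (t : ℝ) : ℝ :=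
  (∫ s, h s * u (t - s)) + ∑' i, w i * u (t - τ i)

theorem ozfMemory_nonneg (hh0 : 0 ≤ h) (hw0 : 0 ≤ w) (hu0 : 0 ≤ u) (t : ℝ) :
    0 ≤ ozfMemory h w τ u t :=
  add_nonneg (integral_nonneg fun s => mul_nonneg (hh0 s) (hu0 _))
    (tsum_nonneg fun i => mul_nonneg (hw0 i) (hu0 _))

theorem ozfMemory_le (hh : Integrable h) (hh0 : 0 ≤ h) (hws : Summable w) (hw0 : 0 ≤ w)
    (hu : Measurable u) (hu0 : 0 ≤ u) (huM : ∀ t, u t ≤ M) (t : ℝ) :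
    ozfMemory h w τ u t ≤ M * ((∫ s, h s) + ∑' i, w i) := by
  have huM' : ∀ t, |u t| ≤ M := fun t => (abs_of_nonneg (hu0 t)).trans_le (huM t)
  have hconv : ∫ s, h s * u (t - s) ≤ ∫ s, h s * M :=
    integral_mono (integrable_mul_comp_sub hh hu huM' t) (hh.mul_const M) fun s =>
      mul_le_mul_of_nonneg_left (huM _) (hh0 s)
  have hsum : ∑' i, w i * u (t - τ i) ≤ ∑' i, w i * M :=
    (summable_mul_comp_sub hws huM' τ t).tsum_le_tsum
      (fun i => mul_le_mul_of_nonneg_left (huM _) (hw0 i)) (hws.mul_right M)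
  rw [integral_mul_const] at hconv
  rw [tsum_mul_right] at hsum
  unfold ozfMemory
  linarith

theorem aestronglyMeasurable_ozfMemory (hh : Integrable h) (hws : Summable w)
    (hu : Measurable u) (huM : ∀ t, |u t| ≤ M) :
    AEStronglyMeasurable (ozfMemory h w τ u) := by
  have hconv : AEStronglyMeasurable fun t => ∫ s, h s * u (t - s) := by
    simpa only [ContinuousLinearMap.mul_apply'] using
      (hh.aestronglyMeasurable.convolution_integrand (ContinuousLinearMap.mul ℝ ℝ)
        hu.aestronglyMeasurable).integral_prod_right'
  have hsum : Measurable fun t => ∑' i, w i * u (t - τ i) := by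
    refine measurable_of_tendsto_metrizable
      (f := fun n t => ∑ i ∈ Finset.range n, w i * u (t - τ i))
      (fun n => Finset.measurable_sum _ fun i _ =>
        measurable_const.mul (hu.comp (measurable_id.sub measurable_const))) ?_
    exact tendsto_pi_nhds.2 fun t => (summable_mul_comp_sub hws huM τ t).hasSum.tendsto_sum_nat
  exact hconv.add hsum.aestronglyMeasurable

theorem integral_sub_ozfMemory_mul_indicator_neg {A : Set ℝ} (hA : MeasurableSet A)
    (hA0 : volume A ≠ 0) (hAtop : volume A ≠ ⊤)
    (hh : Integrable h) (hh0 : 0 ≤ h) (hws : Summable w) (hw0 : 0 ≤ w)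
    (hu : Measurable u) (hu0 : 0 ≤ u) (huM : ∀ t, u t ≤ M)
    (hu1 : ∀ t ∈ A, u t = 1) (hgain : ∀ t ∈ A, 2 ≤ ozfMemory h w τ u t) :
    ∫ t, (u t - (∫ s, h s * u (t - s)) - ∑' i, w i * u (t - τ i)) * A.indicator 1 t < 0 := by
  have huM' : ∀ t, |u t| ≤ M := fun t => (abs_of_nonneg (hu0 t)).trans_le (huM t)
  have hbound (t : ℝ) : ‖u t - ozfMemory h w τ u t‖ ≤ M + M * ((∫ s, h s) + ∑' i, w i) := by
    have := ozfMemory_le (τ := τ) hh hh0 hws hw0 hu hu0 huM t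
    have := ozfMemory_nonneg (τ := τ) hh0 hw0 hu0 t
    have : 0 ≤ u t := hu0 t
    rw [Real.norm_eq_abs, abs_le]
    constructor <;> linarith [huM t]
  have hint : IntegrableOn (fun t => u t - ozfMemory h w τ u t) A :=
    Measure.integrableOn_of_bounded hAtop
      (hu.aestronglyMeasurable.sub (aestronglyMeasurable_ozfMemory hh hws hu huM'))
      (ae_of_all _ hbound)
  calc ∫ t, (u t - (∫ s, h s * u (t - s)) - ∑' i, w i * u (t - τ i)) * A.indicator 1 t
      = ∫ t in A, (u t - ozfMemory h w τ u t) := by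
        rw [← integral_indicator hA]
        congr 1 with t
        by_cases ht : t ∈ A <;> simp [ht, ozfMemory, sub_sub]
    _ ≤ ∫ t in A, (-1 : ℝ) :=
        setIntegral_mono_on hint (integrableOn_const hAtop) hA fun t ht => by
          linarith [hu1 t ht, hgain t ht]
    _ < 0 := by
        rw [setIntegral_const, smul_eq_mul, mul_neg_one, neg_neg_iff_pos]
        exact ENNReal.toReal_pos hA0 hAtop

end Memory

section Window

variable {T ε σ t : ℝ}

noncomputable def windowGate (T ε : ℝ) (t x : ℝ) : ℝ :=
  if Int.fract (t / T) * T < ε then x else 0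

theorem isPeriodicMMB_windowGate (hT : T ≠ 0) (ε : ℝ) : IsPeriodicMMB (windowGate T ε) T := by
  refine ⟨?_, fun t x => ?_, fun t x y hxy => ?_, 1, zero_le_one, fun t x => ?_⟩
  · exact Measurable.ite
      (measurableSet_lt ((measurable_fract.comp (measurable_fst.div_const T)).mul_const T)
        measurable_const) measurable_snd measurable_const
  · have : (t + T) / T = t / T + 1 := by field_simp
    simp only [windowGate, this, Int.fract_add_one]
  · unfold windowGate
    split_ifs
    exacts [hxy, le_rfl]
  · unfold windowGate
    split_ifs <;> simp

theorem fract_div_mul_lt_of_mem_Ioo (hεT : ε ≤ T) (ht : t ∈ Ioo 0 ε) :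
    Int.fract (t / T) * T < ε := by
  have hT : 0 < T := ht.1.trans (ht.2.trans_le hεT)
  rw [Int.fract_eq_self.2 ⟨div_nonneg ht.1.le hT.le, (div_lt_one hT).2 (by linarith [ht.2])⟩,
    div_mul_cancel₀ _ hT.ne']
  exact ht.2

theorem le_fract_div_mul_of_mem_Ioo (hT : 0 < T) (hfar : ∀ k : ℤ, ε ≤ |σ - k * T|)
    (ht : t ∈ Ioo (-σ) (-σ + ε)) : ε ≤ Int.fract (t / T) * T := by
  have hfract : Int.fract (t / T) * T = t - ⌊t / T⌋ * T := by
    rw [Int.fract, sub_mul, div_mul_cancel₀ _ hT.ne']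
  have hfract0 : 0 ≤ Int.fract (t / T) * T := mul_nonneg (Int.fract_nonneg _) hT.le
  by_contra! hlt
  refine (hfar (-⌊t / T⌋)).not_gt (abs_sub_lt_iff.2 ?_)
  obtain ⟨ht1, ht2⟩ := ht
  push_cast
  constructor <;> linarith

end Window

section TwoPulse

variable {h : ℝ → ℝ} {w τ : ℕ → ℝ} {T ε σ K t : ℝ}

noncomputable def twoPulse (σ ε K : ℝ) : ℝ → ℝ :=
  (Ioo 0 ε).indicator 1 + (Ioo (-σ) (-σ + ε)).indicator fun _ => K

theorem measurable_twoPulse : Measurable (twoPulse σ ε K) :=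
  (measurable_const.indicator measurableSet_Ioo).add
    (measurable_const.indicator measurableSet_Ioo)

theorem memLp_twoPulse : MemLp (twoPulse σ ε K) 2 :=
  MemLp.add (memLp_indicator_const 2 measurableSet_Ioo (1 : ℝ) (.inr measure_Ioo_lt_top.ne))
    (memLp_indicator_const 2 measurableSet_Ioo K (.inr measure_Ioo_lt_top.ne))

theorem twoPulse_nonneg (hK : 0 ≤ K) : 0 ≤ twoPulse σ ε K := fun t =>
  add_nonneg (indicator_nonneg (fun _ _ => zero_le_one) t) (indicator_nonneg (fun _ _ => hK) t)

theorem twoPulse_le (hK : 0 ≤ K) (t : ℝ) : twoPulse σ ε K t ≤ 1 + K :=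
  add_le_add (indicator_le_self' (fun _ _ => zero_le_one) t)
    (indicator_le_self' (fun _ _ => hK) t)

theorem abs_twoPulse_le (hK : 0 ≤ K) (t : ℝ) : |twoPulse σ ε K t| ≤ 1 + K :=
  (abs_of_nonneg (twoPulse_nonneg hK t)).trans_le (twoPulse_le hK t)

theorem le_twoPulse (ht : t ∈ Ioo (-σ) (-σ + ε)) : K ≤ twoPulse σ ε K t := by
  simp only [twoPulse, Pi.add_apply, indicator_of_mem ht]
  exact le_add_of_nonneg_left (indicator_nonneg (fun _ _ => zero_le_one) t)

theorem twoPulse_of_fract_div_mul_lt (hT : 0 < T) (hfar : ∀ k : ℤ, ε ≤ |σ - k * T|)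
    (ht : Int.fract (t / T) * T < ε) : twoPulse σ ε K t = (Ioo 0 ε).indicator 1 t := by
  have : t ∉ Ioo (-σ) (-σ + ε) := fun htσ => (le_fract_div_mul_of_mem_Ioo hT hfar htσ).not_gt ht
  simp [twoPulse, this]

theorem windowGate_twoPulse (hT : 0 < T) (hεT : ε ≤ T) (hfar : ∀ k : ℤ, ε ≤ |σ - k * T|)
    (t : ℝ) : windowGate T ε t (twoPulse σ ε K t) = (Ioo 0 ε).indicator 1 t := by
  unfold windowGate
  split_ifs with ht
  · exact twoPulse_of_fract_div_mul_lt hT hfar ht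
  · exact (indicator_of_notMem (fun hA => ht (fract_div_mul_lt_of_mem_Ioo hεT hA)) _).symm

theorem integral_sub_ozfMemory_mul_windowGate_twoPulse_neg (hT : 0 < T) (hε : 0 < ε)
    (hεT : ε ≤ T) (hK : 0 ≤ K) (hfar : ∀ k : ℤ, ε ≤ |σ - k * T|)
    (hh : Integrable h) (hh0 : 0 ≤ h) (hws : Summable w) (hw0 : 0 ≤ w)
    (hgain : ∀ t ∈ Ioo 0 ε, 2 ≤ ozfMemory h w τ (twoPulse σ ε K) t) :
    ∫ t, (twoPulse σ ε K t - (∫ s, h s * twoPulse σ ε K (t - s))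
      - ∑' i, w i * twoPulse σ ε K (t - τ i)) * windowGate T ε t (twoPulse σ ε K t) < 0 := by
  simp_rw [windowGate_twoPulse hT hεT hfar]
  refine integral_sub_ozfMemory_mul_indicator_neg measurableSet_Ioo (by simp [hε])
    measure_Ioo_lt_top.ne hh hh0 hws hw0 measurable_twoPulse (twoPulse_nonneg hK)
    (twoPulse_le hK) (fun t ht => ?_) hgain
  rw [twoPulse_of_fract_div_mul_lt hT hfar (fract_div_mul_lt_of_mem_Ioo hεT ht),
    indicator_of_mem ht, Pi.one_apply]

theorem two_le_ozfMemory_twoPulse_of_delay (hh0 : 0 ≤ h) (hws : Summable w) (hw0 : 0 ≤ w)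
    {i : ℕ} (hwi : 0 < w i) (ht : t ∈ Ioo 0 ε) :
    2 ≤ ozfMemory h w τ (twoPulse (τ i) ε (2 / w i)) t := by
  have hK : 0 ≤ 2 / w i := by positivity
  have hu0 := twoPulse_nonneg (σ := τ i) (ε := ε) hK
  have hsum : Summable fun j => w j * twoPulse (τ i) ε (2 / w i) (t - τ j) :=
    summable_mul_comp_sub hws (abs_twoPulse_le hK) τ t
  calc 2 = w i * (2 / w i) := by field_simp
    _ ≤ w i * twoPulse (τ i) ε (2 / w i) (t - τ i) :=
        mul_le_mul_of_nonneg_left (le_twoPulse ⟨by linarith [ht.1], by linarith [ht.2]⟩) hwi.le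
    _ ≤ ∑' j, w j * twoPulse (τ i) ε (2 / w i) (t - τ j) :=
        hsum.le_tsum i fun j _ => mul_nonneg (hw0 j) (hu0 _)
    _ ≤ ozfMemory h w τ (twoPulse (τ i) ε (2 / w i)) t :=
        le_add_of_nonneg_left (integral_nonneg fun s => mul_nonneg (hh0 s) (hu0 _))

theorem two_le_ozfMemory_twoPulse_of_density (hh : Integrable h) (hh0 : 0 ≤ h) (hw0 : 0 ≤ w)
    {c : ℝ} (hc : 0 < c) (hε : 0 < ε) (hhc : ∀ᵐ s, s ∈ Ioo (σ - ε) (σ + ε) → c ≤ h s)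
    (ht : t ∈ Ioo 0 ε) : 2 ≤ ozfMemory h w τ (twoPulse σ ε (2 / (c * ε))) t := by
  set K := 2 / (c * ε) with hK_def
  have hK : 0 ≤ K := by positivity
  have hu0 := twoPulse_nonneg (σ := σ) (ε := ε) hK
  set J := Ioo (t + σ - ε) (t + σ)
  have hJ : MeasurableSet J := measurableSet_Ioo
  have hconv : ∫ s, J.indicator (fun _ => c * K) s ≤ ∫ s, h s * twoPulse σ ε K (t - s) := by
    refine integral_mono_ae ((integrable_indicator_iff hJ).2 (integrableOn_const
      measure_Ioo_lt_top.ne)) (integrable_mul_comp_sub hh measurable_twoPulse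
      (abs_twoPulse_le hK) t) ?_
    filter_upwards [hhc] with s hs
    by_cases hsJ : s ∈ J
    · rw [indicator_of_mem hsJ]
      obtain ⟨hs1, hs2⟩ := hsJ
      exact mul_le_mul (hs ⟨by linarith [ht.1], by linarith [ht.2]⟩)
        (le_twoPulse ⟨by linarith, by linarith⟩) hK (hh0 s)
    · rw [indicator_of_notMem hsJ]
      exact mul_nonneg (hh0 s) (hu0 _)
  have hJval : ∫ s, J.indicator (fun _ => c * K) s = 2 := by
    rw [integral_indicator_const _ hJ, Real.volume_real_Ioo_of_le (by linarith), smul_eq_mul,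
      show t + σ - (t + σ - ε) = ε by ring, hK_def]
    field_simp
  calc 2 ≤ ∫ s, h s * twoPulse σ ε K (t - s) := hJval ▸ hconv
    _ ≤ ozfMemory h w τ (twoPulse σ ε K) t :=
        le_add_of_nonneg_right (tsum_nonneg fun i => mul_nonneg (hw0 i) (hu0 _))

end TwoPulse

theorem exists_forall_le_abs_sub_intCast_mul {T σ : ℝ} (hT : 0 < T)
    (hσ : ¬ ∃ m : ℤ, σ = m * T) : ∃ ε, 0 < ε ∧ ε ≤ T ∧ ∀ k : ℤ, ε ≤ |σ - k * T| := by
  set x := σ / T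
  have hσx : σ = x * T := (div_mul_cancel₀ σ hT.ne').symm
  have hx : 0 < |x - round x| :=
    abs_pos.2 (sub_ne_zero.2 fun hx => hσ ⟨round x, hσx.trans (congrArg (· * T) hx)⟩)
  refine ⟨|x - round x| * T, by positivity, ?_, fun k => ?_⟩
  · nlinarith [abs_sub_round x]
  · rw [hσx, ← sub_mul, abs_mul, abs_of_pos hT]
    exact mul_le_mul_of_nonneg_right (round_le x k) hT.le

theorem le_abs_sub_intCast_mul_of_not_exists_mem {T a δ : ℝ}
    (hgap : ¬ ∃ m : ℤ, (m : ℝ) * (T / 2) ∈ Ioo a (a + δ)) (k : ℤ) :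
    δ / 4 ≤ |a + δ / 2 - k * T| := by
  by_contra! hlt
  obtain ⟨h1, h2⟩ := abs_sub_lt_iff.1 hlt
  exact hgap ⟨2 * k, by push_cast; constructor <;> linarith⟩

theorem non_altshuller_fails_positivity_general (T : ℝ) (hT : 0 < T)
    (h : ℝ → ℝ) (hhint : Integrable h) (hhnn : ∀ t : ℝ, 0 ≤ h t)
    (w : ℕ → ℝ) (hws : Summable w) (hwnn : ∀ i : ℕ, 0 ≤ w i)
    (τ : ℕ → ℝ)
    (hnotAlt :
      (∃ i : ℕ, 0 < w i ∧ ¬ ∃ m : ℤ, τ i = (m : ℝ) * T) ∨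
      (∃ hlb : ℝ, 0 < hlb ∧ ∃ tj δ : ℝ, 0 < δ ∧ δ < T ∧
        (∀ᵐ t : ℝ, t ∈ Set.Ioo tj (tj + δ) → hlb ≤ h t) ∧
        ¬ ∃ m : ℤ, (m : ℝ) * (T / 2) ∈ Set.Ioo tj (tj + δ))) :
    ∃ N : ℝ → ℝ → ℝ, IsPeriodicMMB N T ∧
      ∃ u : ℝ → ℝ, Measurable u ∧ MemLp u 2 (volume : Measure ℝ) ∧
        (∫ t : ℝ, (u t - (∫ s : ℝ, h s * u (t - s)) - ∑' i : ℕ, w i * u (t - τ i)) *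
          N t (u t)) < 0 := by
  rcases hnotAlt with ⟨i, hwi, hτi⟩ | ⟨c, hc, tj, δ, hδ, hδT, hhc, hgap⟩
  · obtain ⟨ε, hε, hεT, hfar⟩ := exists_forall_le_abs_sub_intCast_mul hT hτi
    exact ⟨windowGate T ε, isPeriodicMMB_windowGate hT.ne' ε, _, measurable_twoPulse,
      memLp_twoPulse, integral_sub_ozfMemory_mul_windowGate_twoPulse_neg hT hε hεT
        (by positivity) hfar hhint hhnn hws hwnn fun t ht =>
          two_le_ozfMemory_twoPulse_of_delay hhnn hws hwnn hwi ht⟩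
  · -- a pulse of width `δ / 4` shifted to the middle of the interval where `h ≥ c`
    have hhc' : ∀ᵐ s, s ∈ Ioo (tj + δ / 2 - δ / 4) (tj + δ / 2 + δ / 4) → c ≤ h s := by
      filter_upwards [hhc] with s hs hs'
      exact hs ⟨by linarith [hs'.1], by linarith [hs'.2]⟩
    exact ⟨windowGate T (δ / 4), isPeriodicMMB_windowGate hT.ne' _, _, measurable_twoPulse,
      memLp_twoPulse, integral_sub_ozfMemory_mul_windowGate_twoPulse_neg hT (by positivity)
        (by linarith) (by positivity) (le_abs_sub_intCast_mul_of_not_exists_mem hgap)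
        hhint hhnn hws hwnn fun t ht =>
          two_le_ozfMemory_twoPulse_of_density hhint hhnn hwnn hc (by positivity) hhc' ht⟩

/-- An OZF multiplier given by data `(h, w, τ)` which is *not* an Altshuller multiplier
with period `T` — either some delay `τᵢ` with weight `wᵢ > 0` is not an integer multiple
of `T`, or the density `h` is bounded below by `h̲ > 0` on an interval of length `δ < T`
containing no integer multiple of `T/2` — fails to preserve the positivity of some
periodic MMB nonlinearity with period `T` for some `u ∈ L²(ℝ)`. -/
theorem non_altshuller_fails_positivity (T : ℝ) (hT : 0 < T)
    (h : ℝ → ℝ) (hhm : Measurable h) (hhint : Integrable h) (hhnn : ∀ t : ℝ, 0 ≤ h t)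
    (w : ℕ → ℝ) (hws : Summable w) (hwnn : ∀ i : ℕ, 0 ≤ w i)
    (τ : ℕ → ℝ) (hτ : ∀ i : ℕ, τ i ≠ 0)
    (hnorm : (∫ t : ℝ, h t) + ∑' i : ℕ, w i < 1)
    (hnotAlt :
      (∃ i : ℕ, 0 < w i ∧ ¬ ∃ m : ℤ, τ i = (m : ℝ) * T) ∨
      (∃ hlb : ℝ, 0 < hlb ∧ ∃ tj δ : ℝ, 0 < δ ∧ δ < T ∧
        (∀ᵐ t : ℝ, t ∈ Set.Ioo tj (tj + δ) → hlb ≤ h t) ∧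
        ¬ ∃ m : ℤ, (m : ℝ) * (T / 2) ∈ Set.Ioo tj (tj + δ))) :
    ∃ N : ℝ → ℝ → ℝ, IsPeriodicMMB N T ∧
      ∃ u : ℝ → ℝ, Measurable u ∧ MemLp u 2 (volume : Measure ℝ) ∧
        (∫ t : ℝ, (u t - (∫ s : ℝ, h s * u (t - s)) - ∑' i : ℕ, w i * u (t - τ i)) *
          N t (u t)) < 0 :=
  non_altshuller_fails_positivity_general T hT h hhint hhnn w hws hwnn τ hnotAlt
end

section
/- Let k > 0, let Q : ℝ → ℝ be slope-restricted on [0,k], and let g ∈ ℝ satisfy 1 + gk > 0 (equivalently 1/k + g > 0). Then for every r̄ ∈ ℝ there exists a unique ȳ ∈ ℝ such that ȳ = Q(r̄ − g·ȳ). (This defines the steady-state map r̄ ↦ ȳ of the Lurye feedback loop with static gain g and nonlinearity Q.) -/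
/-!
The steady states are the zeros of the residual `F y = y - Q (r̄ - g y)`. Slope restriction makes
`F` strongly increasing with constant `min 1 (1 + g k)`: for `g ≥ 0` the term `-Q (r̄ - g y)` is
nondecreasing, and for `g < 0` it decreases at rate at most `-g k`. A continuous strongly
increasing function on `ℝ` is a bijection, so `F` has exactly one zero.
-/

/-- `Q` is slope-restricted on `[0, k]`:
`0 ≤ Q(x₁) − Q(x₂) ≤ k(x₁ − x₂)` whenever `x₁ ≥ x₂`. -/
def SlopeRestricted (Q : ℝ → ℝ) (k : ℝ) : Prop :=
  ∀ x₁ x₂ : ℝ, x₂ ≤ x₁ → 0 ≤ Q x₁ - Q x₂ ∧ Q x₁ - Q x₂ ≤ k * (x₁ - x₂)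

open Filter

theorem Real.bijective_of_continuous_of_mul_sub_le {f : ℝ → ℝ} {c : ℝ} (hf : Continuous f)
    (hc : 0 < c) (h : ∀ x y, x ≤ y → c * (y - x) ≤ f y - f x) : Function.Bijective f := by
  have hmono : StrictMono f := fun x y hxy => by nlinarith [h x y hxy.le]
  refine ⟨hmono.injective, hf.surjective ?_ ?_⟩
  · refine tendsto_atTop_mono' _ ?_
      (tendsto_atTop_add_const_left _ (f 0) (tendsto_id.const_mul_atTop hc))
    filter_upwards [eventually_ge_atTop 0] with y hy
    show f 0 + c * y ≤ f y
    linarith [h 0 y hy]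
  · refine tendsto_atBot_mono' _ ?_
      (tendsto_atBot_add_const_left _ (f 0) (tendsto_id.const_mul_atBot hc))
    filter_upwards [eventually_le_atBot 0] with y hy
    show f y ≤ f 0 + c * y
    linarith [h y 0 hy]

def loopResidual (Q : ℝ → ℝ) (g r y : ℝ) : ℝ :=
  y - Q (r - g * y)

namespace SlopeRestricted

variable {Q : ℝ → ℝ} {k : ℝ}

theorem lipschitzWith (hQ : SlopeRestricted Q k) : LipschitzWith (Real.toNNReal k) Q := by
  refine LipschitzWith.of_dist_le' fun x y => ?_
  rw [Real.dist_eq, Real.dist_eq]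
  rcases le_total y x with hyx | hxy
  · obtain ⟨h₀, hk⟩ := hQ x y hyx
    rwa [abs_of_nonneg h₀, abs_of_nonneg (sub_nonneg.2 hyx)]
  · obtain ⟨h₀, hk⟩ := hQ y x hxy
    rwa [abs_sub_comm, abs_of_nonneg h₀, abs_sub_comm, abs_of_nonneg (sub_nonneg.2 hxy)]

theorem continuous_loopResidual (hQ : SlopeRestricted Q k) (g r : ℝ) :
    Continuous (loopResidual Q g r) :=
  continuous_id.sub <| hQ.lipschitzWith.continuous.comp <|
    continuous_const.sub (continuous_const.mul continuous_id)

theorem min_mul_sub_le_loopResidual_sub (hQ : SlopeRestricted Q k) (g r : ℝ) {y₁ y₂ : ℝ}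
    (hy : y₁ ≤ y₂) :
    min 1 (1 + g * k) * (y₂ - y₁) ≤ loopResidual Q g r y₂ - loopResidual Q g r y₁ := by
  unfold loopResidual
  rcases le_or_gt 0 g with hg | hg
  · obtain ⟨hmono, -⟩ := hQ (r - g * y₁) (r - g * y₂) (by nlinarith)
    nlinarith [min_le_left 1 (1 + g * k)]
  · obtain ⟨-, hslope⟩ := hQ (r - g * y₂) (r - g * y₁) (by nlinarith)
    nlinarith [min_le_right 1 (1 + g * k)]

end SlopeRestricted

theorem steady_state_map_exists_unique_general (k : ℝ)
    (Q : ℝ → ℝ) (hQ : SlopeRestricted Q k) (g : ℝ) (hg : 0 < 1 + g * k)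
    (rbar : ℝ) :
    ∃! ybar : ℝ, ybar = Q (rbar - g * ybar) := by
  have hbij : Function.Bijective (loopResidual Q g rbar) :=
    Real.bijective_of_continuous_of_mul_sub_le (hQ.continuous_loopResidual g rbar)
      (lt_min one_pos hg) fun _ _ => hQ.min_mul_sub_le_loopResidual_sub g rbar
  simpa only [loopResidual, sub_eq_zero] using hbij.existsUnique 0

/-- For `Q` slope-restricted on `[0,k]` and a static gain `g` with `1 + gk > 0`, the
fixed-point equation `ȳ = Q(r̄ − g ȳ)` of the Lurye loop has a unique solution for
every constant input `r̄`: the steady-state map is well defined. -/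
theorem steady_state_map_exists_unique (k : ℝ) (hk : 0 < k)
    (Q : ℝ → ℝ) (hQ : SlopeRestricted Q k) (g : ℝ) (hg : 0 < 1 + g * k)
    (rbar : ℝ) :
    ∃! ybar : ℝ, ybar = Q (rbar - g * ybar) :=
  steady_state_map_exists_unique_general k Q hQ g hg rbar
end

section
/- Let h : ℤ → ℝ be Altshuller multiplier data with period T > 0 (hₙ ≥ 0, h₀ = 0, summable, Σ_{n∈ℤ} hₙ < 1) and let M(ω) = 1 − Σ_{n∈ℤ} hₙ e^{−iωnT}. Then for all positive integers a and b with b > 1, the principal argument of M at the frequency ω = (a/b)(2π/T) satisfies |arg M((a/b)(2π/T))| ≤ (π/2)(1 − 2/b). Equivalently, writing z = 1 − Σ_{n∈ℤ} hₙ exp(−2πi·a·n/b), one has z ≠ 0 and |arg z| ≤ (π/2)(1 − 2/b). -/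
/-! Rotating `z = 1 - Σ hₙ e^{-iφₙ}` by `e^{iθ}` gives a real part
`cos θ - Σ hₙ cos (θ - φₙ) ≥ cos θ · (1 - Σ hₙ)` as soon as every `cos (θ - φₙ)` is at most `cos θ`.
At the frequency `(a/b)(2π/T)` all phases `φₙ` are multiples of `2π/b`, and these keep at least
the distance `π/b` from `±π/b` modulo `2π`. So the bound applies to `θ = 0` and `θ = ±π/b`, giving
`Re z > 0` and `Re (e^{±iπ/b} z) ≥ 0`, which confines `arg z` to `[π/b - π/2, π/2 - π/b]`. -/

open Complex Real

/-- Altshuller multiplier data: a summable family `h : ℤ → ℝ` with `hₙ ≥ 0`,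
`h₀ = 0` and `Σₙ hₙ < 1`. -/
def AltshullerData (h : ℤ → ℝ) : Prop :=
  Summable h ∧ (∀ n : ℤ, 0 ≤ h n) ∧ h 0 = 0 ∧ ∑' n : ℤ, h n < 1

/-- The frequency response of an Altshuller multiplier with period `T`:
`M(ω) = 1 − Σₙ hₙ e^{−iωnT}`. -/
noncomputable def altFreq (h : ℤ → ℝ) (T ω : ℝ) : ℂ :=
  1 - ∑' n : ℤ, (h n : ℂ) * Complex.exp (-(Complex.I * ω * n * T))

theorem sin_mul_sin_succ_nonneg {b : ℕ} (hb : 0 < b) (j : ℤ) :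
    0 ≤ Real.sin (j * π / b) * Real.sin ((j + 1) * π / b) := by
  obtain ⟨m, r, hr0, hrb, rfl⟩ : ∃ m r : ℤ, 0 ≤ r ∧ r < b ∧ j = r + b * m :=
    ⟨j / b, j % b, Int.emod_nonneg j (by omega), Int.emod_lt_of_pos j (by omega),
      (Int.emod_add_mul_ediv j b).symm⟩
  have hbR : (0 : ℝ) < b := by exact_mod_cast hb
  have hrbR : (r : ℝ) + 1 ≤ b := by exact_mod_cast hrb
  have hr0R : (0 : ℝ) ≤ r := by exact_mod_cast hr0
  -- both angles lie in `[mπ, (m + 1)π]`, where `sin` has the sign of `(-1) ^ m`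
  have hshift : ∀ x : ℝ, (((r + b * m : ℤ) : ℝ) + x) * π / b = (r + x) * π / b + m * π := by
    intro x; push_cast; field_simp; ring
  have hsin : ∀ x : ℝ, 0 ≤ x → x ≤ 1 → 0 ≤ Real.sin ((r + x) * π / b) := fun x hx0 hx1 =>
    sin_nonneg_of_nonneg_of_le_pi (by positivity) (by rw [div_le_iff₀ hbR]; nlinarith [pi_pos])
  have h0 : ((r + b * m : ℤ) : ℝ) * π / b = r * π / b + m * π := by simpa using hshift 0
  have hr : 0 ≤ Real.sin (r * π / b) := by simpa using hsin 0 le_rfl zero_le_one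
  rw [h0, hshift 1, sin_add_int_mul_pi, sin_add_int_mul_pi]
  calc (0 : ℝ) ≤ ((-1) ^ m) ^ 2 * (Real.sin (r * π / b) * Real.sin ((r + 1) * π / b)) :=
        mul_nonneg (sq_nonneg _) (mul_nonneg hr (hsin 1 zero_le_one le_rfl))
    _ = _ := by ring

theorem cos_odd_mul_pi_div_le {b : ℕ} (hb : 0 < b) (j : ℤ) :
    Real.cos ((2 * j + 1) * π / b) ≤ Real.cos (π / b) := by
  have hdiff : Real.cos ((2 * j + 1) * π / b) - Real.cos (π / b)
      = -2 * (Real.sin (j * π / b) * Real.sin ((j + 1) * π / b)) := by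
    rw [Real.cos_sub_cos]
    have e₁ : ((2 * j + 1) * π / b + π / b) / 2 = (j + 1) * π / b := by ring
    have e₂ : ((2 * j + 1) * π / b - π / b) / 2 = j * π / b := by ring
    rw [e₁, e₂]; ring
  linarith [sin_mul_sin_succ_nonneg hb j]

theorem summable_ofReal_mul_exp_mul_I {ι : Type*} {h : ι → ℝ} (hsum : Summable h) (x : ι → ℝ) :
    Summable fun n => (h n : ℂ) * exp (x n * I) := by
  refine Summable.of_norm ?_
  simpa only [norm_mul, norm_real, Real.norm_eq_abs, norm_exp_ofReal_mul_I, mul_one]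
    using hsum.abs

theorem cos_mul_one_sub_tsum_le_re_exp_mul {ι : Type*} {h : ι → ℝ} (hsum : Summable h)
    (hpos : ∀ n, 0 ≤ h n) (φ : ι → ℝ) {θ : ℝ} (hθ : ∀ n, Real.cos (θ - φ n) ≤ Real.cos θ) :
    Real.cos θ * (1 - ∑' n, h n)
      ≤ (exp (θ * I) * (1 - ∑' n, (h n : ℂ) * exp (-(φ n * I)))).re := by
  have hrot : exp (θ * I) * (1 - ∑' n, (h n : ℂ) * exp (-(φ n * I)))
      = exp (θ * I) - ∑' n, (h n : ℂ) * exp ((θ - φ n : ℝ) * I) := by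
    rw [mul_sub, mul_one, ← tsum_mul_left]
    congr 1
    refine tsum_congr fun n => ?_
    rw [mul_left_comm, ← Complex.exp_add]
    push_cast; ring_nf
  have hre : ∀ n, ((h n : ℂ) * exp ((θ - φ n : ℝ) * I)).re = h n * Real.cos (θ - φ n) :=
    fun n => by rw [re_ofReal_mul, exp_ofReal_mul_I_re]
  rw [hrot, sub_re, exp_ofReal_mul_I_re, re_tsum (summable_ofReal_mul_exp_mul_I hsum _)]
  simp only [hre]
  have hcos : ∑' n, h n * Real.cos (θ - φ n) ≤ ∑' n, h n * Real.cos θ :=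
    Summable.tsum_le_tsum (fun n => mul_le_mul_of_nonneg_left (hθ n) (hpos n))
      (by simpa only [reCLM_apply, hre] using
        (summable_ofReal_mul_exp_mul_I hsum fun n => θ - φ n).mapL reCLM) (hsum.mul_right _)
  rw [tsum_mul_right] at hcos
  linarith

theorem re_exp_mul_I_mul (z : ℂ) (α : ℝ) :
    (exp (α * I) * z).re = ‖z‖ * Real.cos (arg z + α) := by
  conv_lhs => rw [← norm_mul_exp_arg_mul_I z]
  rw [mul_left_comm, ← Complex.exp_add, ← add_mul, ← ofReal_add, re_ofReal_mul,
    exp_ofReal_mul_I_re, add_comm α]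

theorem abs_arg_le_pi_div_two_sub {z : ℂ} {α : ℝ} (hz : 0 < z.re) (hα : α ≤ π)
    (hplus : 0 ≤ (exp (α * I) * z).re) (hminus : 0 ≤ (exp ((-α : ℝ) * I) * z).re) :
    |arg z| ≤ π / 2 - α := by
  have harg := abs_lt.mp (abs_arg_lt_pi_div_two_iff.mpr (Or.inl hz))
  have hnorm : 0 < ‖z‖ := norm_pos_iff.mpr fun h => by simp [h] at hz
  rw [re_exp_mul_I_mul, mul_nonneg_iff_of_pos_left hnorm] at hplus hminus
  rw [← sub_eq_add_neg, ← Real.cos_neg, neg_sub] at hminus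
  rw [abs_le]
  constructor
  · by_contra! hlow
    linarith [cos_neg_of_pi_div_two_lt_of_lt (x := α - arg z) (by linarith) (by linarith)]
  · by_contra! hup
    linarith [cos_neg_of_pi_div_two_lt_of_lt (x := arg z + α) (by linarith) (by linarith)]

theorem one_sub_tsum_ne_zero_and_abs_arg_le {ι : Type*} {h : ι → ℝ} (hsum : Summable h)
    (hpos : ∀ n, 0 ≤ h n) (hlt : ∑' n, h n < 1) {b : ℕ} (hb : 1 < b) (k : ι → ℤ) {z : ℂ}
    (hz : z = 1 - ∑' n, (h n : ℂ) * exp (-((2 * k n * π / b : ℝ) * I))) :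
    z ≠ 0 ∧ |arg z| ≤ π / 2 - π / b := by
  have hbound := fun θ => hz ▸ cos_mul_one_sub_tsum_le_re_exp_mul (θ := θ) hsum hpos
    (fun n => 2 * k n * π / b)
  have hre : 0 < z.re := by
    have h0 := hbound 0 fun n => Real.cos_zero ▸ cos_le_one _
    simp only [Real.cos_zero, ofReal_zero, zero_mul, Complex.exp_zero, one_mul] at h0
    linarith
  have hbR : (2 : ℝ) ≤ b := by exact_mod_cast hb
  have hπb : π / b ≤ π / 2 := div_le_div_of_nonneg_left pi_pos.le two_pos hbR
  have hmargin : 0 ≤ Real.cos (π / b) * (1 - ∑' n, h n) :=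
    mul_nonneg (cos_nonneg_of_mem_Icc ⟨by linarith [div_pos pi_pos (by linarith : (0 : ℝ) < b)],
      hπb⟩) (by linarith)
  refine ⟨fun h0 => by simp [h0] at hre, abs_arg_le_pi_div_two_sub hre (by linarith [pi_pos]) ?_ ?_⟩
  · refine hmargin.trans (hbound _ fun n => ?_)
    have e : π / b - 2 * k n * π / b = (2 * ((-k n : ℤ) : ℝ) + 1) * π / b := by push_cast; ring
    exact e ▸ cos_odd_mul_pi_div_le (by omega) _
  · refine (Real.cos_neg _ ▸ hmargin).trans (hbound _ fun n => ?_)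
    have e : -(π / b) - 2 * k n * π / b = -((2 * (k n : ℝ) + 1) * π / b) := by ring
    rw [e, Real.cos_neg, Real.cos_neg]
    exact cos_odd_mul_pi_div_le (by omega) _

theorem altFreq_rat_freq (h : ℤ → ℝ) {T : ℝ} (hT : T ≠ 0) (a b : ℕ) :
    altFreq h T ((a / b) * (2 * π / T))
      = 1 - ∑' n, (h n : ℂ) * exp (-((2 * ((a * n : ℤ) : ℝ) * π / b : ℝ) * I)) := by
  have hTC : (T : ℂ) ≠ 0 := ofReal_ne_zero.mpr hT
  unfold altFreq
  congr 1
  refine tsum_congr fun n => ?_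
  congr 3
  push_cast
  field_simp

theorem altshuller_phase_limitation_general (h : ℤ → ℝ) (hAlt : AltshullerData h)
    (T : ℝ) (hT : 0 < T) (a b : ℕ) (hb : 1 < b) :
    altFreq h T ((a / b) * (2 * π / T)) ≠ 0 ∧
    |Complex.arg (altFreq h T ((a / b) * (2 * π / T)))| ≤ (π / 2) * (1 - 2 / b) := by
  obtain ⟨hsum, hpos, -, hlt⟩ := hAlt
  have hrhs : (π / 2) * (1 - 2 / b) = π / 2 - π / b := by ring
  rw [hrhs]
  exact one_sub_tsum_ne_zero_and_abs_arg_le hsum hpos hlt hb (fun n => a * n)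
    (altFreq_rat_freq h hT.ne' a b)

/-- Phase limitation of Altshuller multipliers: at the rational frequency
`ω = (a/b)(2π/T)` (with `a, b` positive integers, `b > 1`), the frequency response is
nonzero and its principal argument satisfies `|arg M(ω)| ≤ (π/2)(1 − 2/b)`. -/
theorem altshuller_phase_limitation (h : ℤ → ℝ) (hAlt : AltshullerData h)
    (T : ℝ) (hT : 0 < T) (a b : ℕ) (ha : 0 < a) (hb : 1 < b) :
    altFreq h T ((a / b) * (2 * π / T)) ≠ 0 ∧
    |Complex.arg (altFreq h T ((a / b) * (2 * π / T)))| ≤ (π / 2) * (1 - 2 / b) :=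
  altshuller_phase_limitation_general h hAlt T hT a b hb
end

section
/- Let G : ℝ → ℂ and T > 0, and let a, b be positive integers with b > 1. Suppose there exists an Altshuller multiplier with period T suitable for G, i.e. a summable h : ℤ → ℝ with hₙ ≥ 0, h₀ = 0 and Σ_{n∈ℤ} hₙ < 1 such that, with M(ω) = 1 − Σ_{n∈ℤ} hₙ e^{−iωnT}, Re(M(ω)·G(ω)) > 0 for all ω ∈ ℝ. Then G((a/b)(2π/T)) ≠ 0 and its principal argument satisfies |arg G((a/b)(2π/T))| ≤ π(1 − 1/b). -/
open Complex Real

/-!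
At `ω = (a/b)(2π/T)` every phase `ωnT` lies in `(2π/b)ℤ`, and for such `θ` the point `1 - e^{-iθ}`
lies in the closed sector `|arg z| ≤ π/2 - π/b`, written linearly as
`sin (π/b) |Im z| ≤ cos (π/b) Re z` so that it survives summation. Hence
`M(ω) = (1 - Σ hₙ) + Σ hₙ (1 - e^{-iωnT})` lies in that sector, with positive real part.
As `Re (M(ω) G(ω)) > 0` says `|arg (M(ω) G(ω))| < π/2`, and `G(ω)` is a positive multiple of
`M(ω) G(ω) · conj M(ω)`, the arguments add up to `|arg G(ω)| < π/2 + (π/2 - π/b)`.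
-/

open ComplexConjugate

theorem sin_mul_abs_cos_le_cos_mul_sin {β x : ℝ} (hβ : 0 ≤ β) (hβx : β ≤ x) (hxβ : x ≤ π - β) :
    Real.sin β * |Real.cos x| ≤ Real.cos β * Real.sin x := by
  have hsub : 0 ≤ Real.sin (x - β) :=
    Real.sin_nonneg_of_nonneg_of_le_pi (by linarith) (by linarith)
  have hadd : 0 ≤ Real.sin (x + β) := by
    rw [← Real.sin_pi_sub]
    exact Real.sin_nonneg_of_nonneg_of_le_pi (by linarith) (by linarith)
  rw [Real.sin_sub] at hsub
  rw [Real.sin_add] at hadd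
  rw [← abs_of_nonneg (Real.sin_nonneg_of_nonneg_of_le_pi hβ (by linarith)), ← abs_mul,
    abs_le]
  constructor <;> linarith

theorem sin_mul_abs_sin_two_mul_le {β x : ℝ} (hβ : 0 ≤ β) (hβx : β ≤ x) (hxβ : x ≤ π - β) :
    Real.sin β * |Real.sin (2 * x)| ≤ Real.cos β * (1 - Real.cos (2 * x)) := by
  have hsin : 0 ≤ Real.sin x := Real.sin_nonneg_of_nonneg_of_le_pi (by linarith) (by linarith)
  have h := mul_le_mul_of_nonneg_left (sin_mul_abs_cos_le_cos_mul_sin hβ hβx hxβ)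
    (mul_nonneg zero_le_two hsin)
  rw [Real.sin_two_mul, Real.cos_two_mul, Real.cos_sq', abs_mul, abs_mul, abs_two,
    abs_of_nonneg hsin]
  linear_combination h

theorem sin_pi_div_mul_abs_sin_le {b : ℕ} (hb : 1 < b) (m : ℤ) :
    Real.sin (π / b) * |Real.sin (2 * π * m / b)| ≤
      Real.cos (π / b) * (1 - Real.cos (2 * π * m / b)) := by
  have hb₀ : (0 : ℝ) < b := by positivity
  obtain ⟨r, q, hr₀, hrb, rfl⟩ : ∃ r q : ℤ, 0 ≤ r ∧ r < b ∧ m = r + b * q :=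
    ⟨m % b, m / b, Int.emod_nonneg m (by omega), Int.emod_lt_of_pos m (by omega),
      (Int.emod_add_mul_ediv m b).symm⟩
  have hangle : 2 * π * ↑(r + b * q : ℤ) / b = 2 * (π * r / b) + q * (2 * π) := by
    push_cast; field_simp
  rw [hangle, Real.sin_add_int_mul_two_pi, Real.cos_add_int_mul_two_pi]
  rcases hr₀.eq_or_lt with rfl | hr_pos
  · simp
  have hr₁ : (1 : ℝ) ≤ r := by exact_mod_cast hr_pos
  have hrb' : (r : ℝ) + 1 ≤ b := by exact_mod_cast (show r + 1 ≤ b by omega)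
  apply sin_mul_abs_sin_two_mul_le (by positivity)
  · exact div_le_div_of_nonneg_right (by nlinarith [pi_pos]) hb₀.le
  · rw [show π - π / b = π * (b - 1) / b by field_simp]
    exact div_le_div_of_nonneg_right (by nlinarith [pi_pos]) hb₀.le

theorem abs_arg_le_of_norm_mul_cos_le_re {z : ℂ} (hz : z ≠ 0) {t : ℝ} (ht₀ : 0 ≤ t) (htπ : t ≤ π)
    (hre : ‖z‖ * Real.cos t ≤ z.re) : |arg z| ≤ t := by
  rw [← Real.strictAntiOn_cos.le_iff_ge ⟨ht₀, htπ⟩ ⟨abs_nonneg _, abs_arg_le_pi z⟩,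
    Real.cos_abs, cos_arg hz, le_div_iff₀ (norm_pos_iff.mpr hz), mul_comm]
  exact hre

theorem abs_arg_le_of_sin_mul_abs_im_le {z : ℂ} {β : ℝ} (hβ₀ : 0 ≤ β) (hβ : β ≤ π / 2)
    (hre : 0 < z.re) (hz : Real.sin β * |z.im| ≤ Real.cos β * z.re) :
    |arg z| ≤ π / 2 - β := by
  refine abs_arg_le_of_norm_mul_cos_le_re (fun h => by simp [h] at hre) (by linarith)
    (by linarith) ?_
  have hsin : 0 ≤ Real.sin β := Real.sin_nonneg_of_nonneg_of_le_pi hβ₀ (by linarith)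
  have hsq : (‖z‖ * Real.sin β) ^ 2 ≤ z.re ^ 2 := by
    have := mul_self_le_mul_self (by positivity) hz
    rw [mul_pow, ← normSq_eq_norm_sq, normSq_apply]
    nlinarith [Real.sin_sq_add_cos_sq β, abs_mul_abs_self z.im]
  rw [Real.cos_pi_div_two_sub]
  exact (pow_le_pow_iff_left₀ (by positivity) hre.le two_ne_zero).mp hsq

theorem abs_arg_lt_of_re_mul_pos {M g : ℂ} {α : ℝ} (hα : α ≤ π / 2) (hM : |arg M| ≤ α)
    (hMg : 0 < (M * g).re) : |arg g| < π / 2 + α := by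
  have hM₀ : M ≠ 0 := by rintro rfl; simp at hMg
  have hg₀ : g ≠ 0 := by rintro rfl; simp at hMg
  have hMg_arg : |arg (M * g)| < π / 2 := abs_arg_lt_pi_div_two_iff.mpr (.inl hMg)
  have hconj : arg (conj M) = -arg M := by
    rw [arg_conj, if_neg]
    intro h; rw [h, abs_of_pos pi_pos] at hM; linarith [pi_pos]
  have hsum : arg (M * g * conj M) = arg (M * g) + arg (conj M) := by
    apply arg_mul (mul_ne_zero hM₀ hg₀) ((map_ne_zero _).mpr hM₀)
    rw [hconj]
    constructor <;> linarith [abs_lt.mp hMg_arg, abs_le.mp hM]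
  have hg : arg (M * g * conj M) = arg g := by
    rw [mul_right_comm, mul_conj]
    exact arg_real_mul g (normSq_pos.mpr hM₀)
  rw [← hg, hsum, hconj, ← sub_eq_add_neg]
  linarith [abs_sub (arg (M * g)) (arg M)]

theorem Summable.mul_of_abs_le {ι : Type*} {f u : ι → ℝ} {C : ℝ} (hf : Summable f)
    (hu : ∀ i, |u i| ≤ C) : Summable fun i => f i * u i :=
  hf.abs.mul_right C |>.of_norm_bounded fun i => by
    rw [Real.norm_eq_abs, abs_mul]
    exact mul_le_mul_of_nonneg_left (hu i) (abs_nonneg _)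

section altFreq

variable {h : ℤ → ℝ} (T ω : ℝ)

theorem summable_altFreq_terms (hh : Summable h) :
    Summable fun n : ℤ => (h n : ℂ) * Complex.exp (-(Complex.I * ω * n * T)) :=
  hh.abs.of_norm_bounded fun n => by simp [Complex.norm_exp]

theorem altFreq_re (hh : Summable h) :
    (altFreq h T ω).re = 1 - ∑' n : ℤ, h n * Real.cos (ω * n * T) := by
  rw [altFreq, sub_re, one_re, re_tsum (summable_altFreq_terms T ω hh)]
  simp [Complex.exp_re]

theorem altFreq_im (hh : Summable h) :
    (altFreq h T ω).im = ∑' n : ℤ, h n * Real.sin (ω * n * T) := by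
  rw [altFreq, sub_im, one_im, im_tsum (summable_altFreq_terms T ω hh), zero_sub, ← tsum_neg]
  simp [Complex.exp_im]

theorem altFreq_re_pos (hh : AltshullerData h) : 0 < (altFreq h T ω).re := by
  obtain ⟨hs, hpos, -, hlt⟩ := hh
  have hcos_le : ∑' n : ℤ, h n * Real.cos (ω * n * T) ≤ ∑' n : ℤ, h n :=
    (hs.mul_of_abs_le fun n => Real.abs_cos_le_one _).tsum_le_tsum
      (fun n => mul_le_of_le_one_right (hpos n) (Real.cos_le_one _)) hs
  rw [altFreq_re T ω hs]
  linarith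

theorem sin_mul_abs_im_altFreq_le (hh : AltshullerData h) {β : ℝ} (hsin : 0 ≤ Real.sin β)
    (hcos : 0 ≤ Real.cos β)
    (hterm : ∀ n : ℤ, Real.sin β * |Real.sin (ω * n * T)| ≤
      Real.cos β * (1 - Real.cos (ω * n * T))) :
    Real.sin β * |(altFreq h T ω).im| ≤ Real.cos β * (altFreq h T ω).re := by
  obtain ⟨hs, hpos, -, hlt⟩ := hh
  have habs (n : ℤ) : |h n * Real.sin (ω * n * T)| = h n * |Real.sin (ω * n * T)| := by
    rw [abs_mul, abs_of_nonneg (hpos n)]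
  have ssin := hs.mul_of_abs_le fun n => Real.abs_sin_le_one (ω * n * T)
  have sabs : Summable fun n => h n * |Real.sin (ω * n * T)| := by
    simpa only [habs] using ssin.abs
  have scos := hs.mul_of_abs_le fun n => Real.abs_cos_le_one (ω * n * T)
  have sdiff : Summable fun n => h n * (1 - Real.cos (ω * n * T)) := by
    simpa only [mul_sub, mul_one] using hs.sub scos
  calc Real.sin β * |(altFreq h T ω).im|
      ≤ Real.sin β * ∑' n : ℤ, h n * |Real.sin (ω * n * T)| := by
        have := norm_tsum_le_tsum_norm ssin.norm
        simp only [Real.norm_eq_abs, habs] at this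
        rw [altFreq_im T ω hs]
        exact mul_le_mul_of_nonneg_left this hsin
    _ ≤ Real.cos β * ∑' n : ℤ, h n * (1 - Real.cos (ω * n * T)) := by
        rw [← tsum_mul_left, ← tsum_mul_left]
        refine (sabs.mul_left _).tsum_le_tsum (fun n => ?_) (sdiff.mul_left _)
        linarith [mul_le_mul_of_nonneg_left (hterm n) (hpos n)]
    _ ≤ Real.cos β * (altFreq h T ω).re := by
        rw [altFreq_re T ω hs, tsum_congr fun n => mul_one_sub (h n) _, hs.tsum_sub scos]
        exact mul_le_mul_of_nonneg_left (by linarith) hcos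

end altFreq

theorem plant_phase_limitation_general (G : ℝ → ℂ) (T : ℝ) (hT : 0 < T)
    (a b : ℕ) (hb : 1 < b)
    (hsuit : ∃ h : ℤ → ℝ, AltshullerData h ∧
      ∀ ω : ℝ, 0 < (altFreq h T ω * G ω).re) :
    G ((a / b) * (2 * π / T)) ≠ 0 ∧
    |Complex.arg (G ((a / b) * (2 * π / T)))| ≤ π * (1 - 1 / b) := by
  obtain ⟨h, hh, hsuit⟩ := hsuit
  set ω : ℝ := (a / b) * (2 * π / T)
  have hβ₀ : 0 ≤ π / b := by positivity
  have hβ : π / b ≤ π / 2 := div_le_div_of_nonneg_left pi_pos.le two_pos (by exact_mod_cast hb)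
  have hωT (n : ℤ) : ω * n * T = 2 * π * (a * n : ℤ) / b := by
    simp only [ω]; push_cast; field_simp
  have hM := sin_mul_abs_im_altFreq_le T ω hh
    (Real.sin_nonneg_of_nonneg_of_le_pi hβ₀ (by linarith))
    (Real.cos_nonneg_of_mem_Icc ⟨by linarith, hβ⟩)
    fun n => hωT n ▸ sin_pi_div_mul_abs_sin_le hb (a * n)
  have hargM := abs_arg_le_of_sin_mul_abs_im_le hβ₀ hβ (altFreq_re_pos T ω hh) hM
  have hargG := abs_arg_lt_of_re_mul_pos (by linarith) hargM (hsuit ω)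
  refine ⟨fun hG => by simpa [hG] using hsuit ω, ?_⟩
  linarith [show π * (1 - 1 / b) = π / 2 + (π / 2 - π / b) by ring]

/-- Phase limitation on plants admitting a suitable Altshuller multiplier: if some
Altshuller multiplier with period `T` is suitable for `G`, then at the frequency
`ω = (a/b)(2π/T)` (with `a, b` positive integers, `b > 1`) we have `G(ω) ≠ 0` and
`|arg G(ω)| ≤ π(1 − 1/b)`. -/
theorem plant_phase_limitation (G : ℝ → ℂ) (T : ℝ) (hT : 0 < T)
    (a b : ℕ) (ha : 0 < a) (hb : 1 < b)
    (hsuit : ∃ h : ℤ → ℝ, AltshullerData h ∧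
      ∀ ω : ℝ, 0 < (altFreq h T ω * G ω).re) :
    G ((a / b) * (2 * π / T)) ≠ 0 ∧
    |Complex.arg (G ((a / b) * (2 * π / T)))| ≤ π * (1 - 1 / b) :=
  plant_phase_limitation_general G T hT a b hb hsuit
end

section
/- Let G : ℝ → ℂ. Suppose that for every T > 0 there exists an Altshuller multiplier with period T suitable for G, i.e. a summable h^{(T)} : ℤ → ℝ with h^{(T)}ₙ ≥ 0, h^{(T)}₀ = 0 and Σ_{n∈ℤ} h^{(T)}ₙ < 1 such that, with M_T(ω) = 1 − Σ_{n∈ℤ} h^{(T)}ₙ e^{−iωnT}, Re(M_T(ω)·G(ω)) > 0 for all ω ∈ ℝ. Then Re(G(ω)) ≥ 0 for every ω ∈ ℝ (i.e. |∠G(jω)| ≤ π/2 at all frequencies, which is the circle-criterion phase condition). -/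
open Complex Real

/-- If for every period `T > 0` there is an Altshuller multiplier with period `T`
suitable for `G`, then `Re G(ω) ≥ 0` at all frequencies: one can do no better than the
circle criterion. -/
theorem all_periods_implies_circle_criterion (G : ℝ → ℂ)
    (hsuit : ∀ T : ℝ, 0 < T → ∃ h : ℤ → ℝ, AltshullerData h ∧
      ∀ ω : ℝ, 0 < (altFreq h T ω * G ω).re) :
    ∀ ω : ℝ, 0 ≤ (G ω).re := by
  intro ω
  -- Choose a period T > 0 with ωT a multiple of 2π, so all exponentials are 1.
  obtain ⟨T, hT, hωT⟩ : ∃ T : ℝ, 0 < T ∧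
      ∀ n : ℤ, Complex.exp (-(Complex.I * ω * n * T)) = 1 := by
    rcases lt_trichotomy ω 0 with hω | hω | hω
    · refine ⟨(2 * π) / (-ω), div_pos (by positivity) (by linarith), fun n => ?_⟩
      have hne : (ω : ℂ) ≠ 0 := by exact_mod_cast hω.ne
      have heq : -(Complex.I * ω * n * (((2 * π) / (-ω)) : ℝ)) =
          (n : ℂ) * (2 * (π : ℂ) * Complex.I) := by
        push_cast
        field_simp
      rw [heq, Complex.exp_int_mul_two_pi_mul_I]
    · subst hω
      exact ⟨1, one_pos, fun n => by simp⟩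
    · refine ⟨(2 * π) / ω, div_pos (by positivity) hω, fun n => ?_⟩
      have hne : (ω : ℂ) ≠ 0 := by exact_mod_cast hω.ne'
      have heq : -(Complex.I * ω * n * (((2 * π) / ω) : ℝ)) =
          ((-n : ℤ) : ℂ) * (2 * (π : ℂ) * Complex.I) := by
        push_cast
        field_simp
      rw [heq, Complex.exp_int_mul_two_pi_mul_I]
  obtain ⟨h, ⟨hsum, hnn, h0, hlt⟩, hpos⟩ := hsuit T hT
  have hs : altFreq h T ω = ((1 - ∑' n : ℤ, h n : ℝ) : ℂ) := by
    unfold altFreq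
    simp only [hωT, mul_one]
    rw [← Complex.ofReal_tsum]
    push_cast
    ring
  have hp := hpos ω
  rw [hs, Complex.re_ofReal_mul] at hp
  nlinarith
end

section
/- Let k > 0, let M, G ∈ ℂ and h > 0. Set A = 2·Re(M·G) + (2/k)·Re(M) and suppose A > 0. Then the 2×2 Hermitian matrix [[1/h − A, M], [conj(M), −h]] is negative definite if and only if h > (1 + |M|²)/A. Consequently the least upper bound on h guaranteeing negative definiteness frequency-wise is h_M = sup_ω (1 + |M(jω)|²)/(G(jω)*M(jω)* + M(jω)G(jω) + (M(jω) + M(jω)*)/k), the multiplier-based bound on the closed-loop L² gain from r₂ to y₂ of a Lurye system with slope-restricted nonlinearity. -/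
/-!
A Hermitian `2 × 2` matrix `[[a, b], [b̄, d]]` with `d > 0` is positive definite exactly when
`a d > |b|²`, because `d · x* P x = |d x₁ + b̄ x₀|² + (a d − |b|²) |x₀|²`. Applied to the negated
LMI matrix this reads `h > 0` and `(A − 1/h) h > |M|²`, that is `A h > 1 + |M|²`.
-/

open Matrix Complex
open scoped ComplexOrder

theorem quadratic_pos_of_sq_lt_mul {a d m t s : ℝ} (hd : 0 < d) (hm : m ^ 2 < a * d)
    (hts : t ≠ 0 ∨ s ≠ 0) : 0 < a * t ^ 2 - 2 * m * t * s + d * s ^ 2 := by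
  have hgap := sub_pos.mpr hm
  rcases hts with ht | hs
  · have := mul_pos hgap (pow_pos (abs_pos.mpr ht) 2)
    rw [sq_abs] at this
    nlinarith [sq_nonneg (d * s - m * t)]
  · have ha : 0 < a := pos_of_mul_pos_left (hm.trans_le' (sq_nonneg m)) hd.le
    have := mul_pos hgap (pow_pos (abs_pos.mpr hs) 2)
    rw [sq_abs] at this
    nlinarith [sq_nonneg (a * t - m * s)]

namespace Matrix

section HermitianFinTwo

open ComplexConjugate

variable {𝕜 : Type*} [RCLike 𝕜]

theorem star_dotProduct_mulVec_hermitian_fin_two (a d : ℝ) (b : 𝕜) (x : Fin 2 → 𝕜) :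
    star x ⬝ᵥ !![(a : 𝕜), b; conj b, (d : 𝕜)] *ᵥ x =
      ((a * ‖x 0‖ ^ 2 + 2 * RCLike.re (conj (x 0) * b * x 1) + d * ‖x 1‖ ^ 2 : ℝ) : 𝕜) := by
  have h0 := RCLike.conj_mul (x 0)
  have h1 := RCLike.conj_mul (x 1)
  have hcross := RCLike.add_conj (conj (x 0) * b * x 1)
  simp only [map_mul, RCLike.conj_conj] at hcross
  simp only [dotProduct, mulVec, Fin.sum_univ_two, Pi.star_apply, RCLike.star_def, of_apply,
    cons_val', cons_val_zero, cons_val_one, empty_val', cons_val_fin_one]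
  push_cast
  linear_combination (a : 𝕜) * h0 + (d : 𝕜) * h1 + hcross

theorem posDef_hermitian_fin_two_iff (a d : ℝ) (b : 𝕜) :
    (!![(a : 𝕜), b; conj b, (d : 𝕜)]).PosDef ↔ 0 < d ∧ ‖b‖ ^ 2 < a * d := by
  rw [posDef_iff_dotProduct_mulVec]
  simp only [star_dotProduct_mulVec_hermitian_fin_two, RCLike.ofReal_pos]
  constructor
  · rintro ⟨-, hpos⟩
    have hd : 0 < d := by simpa using hpos (x := ![0, 1]) (by simp)
    refine ⟨hd, ?_⟩
    -- the form at `(d, -b̄)` equals `d (a d − |b|²)`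
    have := hpos (x := ![(d : 𝕜), -conj b]) (by simp [hd.ne'])
    simp only [cons_val_zero, cons_val_one, RCLike.conj_ofReal, mul_neg, mul_assoc,
      RCLike.mul_conj, norm_neg, RCLike.norm_conj, RCLike.norm_ofReal, abs_of_pos hd,
      ← RCLike.ofReal_pow, ← RCLike.ofReal_mul, map_neg, RCLike.ofReal_re] at this
    nlinarith
  · rintro ⟨hd, hb⟩
    refine ⟨?_, fun x hx => ?_⟩
    · ext i j
      fin_cases i <;> fin_cases j <;> simp
    · have hcross : -(‖b‖ * ‖x 0‖ * ‖x 1‖) ≤ RCLike.re (conj (x 0) * b * x 1) :=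
        calc -(‖b‖ * ‖x 0‖ * ‖x 1‖) = -‖conj (x 0) * b * x 1‖ := by
              rw [norm_mul, norm_mul, RCLike.norm_conj]; ring
          _ ≤ _ := (abs_le.mp (RCLike.abs_re_le_norm _)).1
      have hx' : ‖x 0‖ ≠ 0 ∨ ‖x 1‖ ≠ 0 := by
        contrapose! hx
        ext i
        fin_cases i <;> simp [norm_eq_zero.mp hx.1, norm_eq_zero.mp hx.2]
      have := quadratic_pos_of_sq_lt_mul (m := ‖b‖) hd hb hx'
      nlinarith

end HermitianFinTwo

end Matrix

theorem gain_lmi_negdef_iff_general (M : ℂ) (h : ℝ) (A : ℝ) (hApos : 0 < A) :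
    (-(!![((1 / h - A : ℝ) : ℂ), M;
          (starRingEnd ℂ) M, ((-h : ℝ) : ℂ)] : Matrix (Fin 2) (Fin 2) ℂ)).PosDef ↔
      (1 + ‖M‖ ^ 2) / A < h := by
  have hneg : -(!![((1 / h - A : ℝ) : ℂ), M; (starRingEnd ℂ) M, ((-h : ℝ) : ℂ)]) =
      !![((A - 1 / h : ℝ) : ℂ), -M; (starRingEnd ℂ) (-M), (h : ℂ)] := by
    ext i j
    fin_cases i <;> fin_cases j <;> simp
  rw [hneg, div_lt_iff₀ hApos]
  refine (posDef_hermitian_fin_two_iff (𝕜 := ℂ) (A - 1 / h) h (-M)).trans ?_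
  rw [norm_neg]
  constructor
  · rintro ⟨hh, hM⟩
    rw [sub_mul, one_div_mul_cancel hh.ne'] at hM
    linarith
  · intro hM
    have hh : 0 < h := by nlinarith [sq_nonneg ‖M‖]
    rw [sub_mul, one_div_mul_cancel hh.ne']
    exact ⟨hh, by linarith⟩

/-- Negative-definiteness criterion for the multiplier LMI: for `M, G ∈ ℂ`, `k > 0`,
`h > 0` and `A = 2 Re(MG) + (2/k) Re(M) > 0`, the Hermitian matrix
`[[1/h − A, M], [M*, −h]]` is negative definite if and only if `h > (1 + |M|²)/A`.
This yields the multiplier-based bound `h_M` on the `L²` gain from `r₂` to `y₂`. -/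
theorem gain_lmi_negdef_iff (k : ℝ) (hk : 0 < k) (M G : ℂ) (h : ℝ) (hh : 0 < h)
    (A : ℝ) (hA : A = 2 * (M * G).re + (2 / k) * M.re) (hApos : 0 < A) :
    (-(!![((1 / h - A : ℝ) : ℂ), M;
          (starRingEnd ℂ) M, ((-h : ℝ) : ℂ)] : Matrix (Fin 2) (Fin 2) ℂ)).PosDef ↔
      (1 + ‖M‖ ^ 2) / A < h :=
  gain_lmi_negdef_iff_general M h A hApos
end
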